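/- arXiv:2012.10434 — 3 statements merged into one kernel-verified Lean document; each statement's English description precedes it below -/
import Mathlib

section
/- Let Λ be a numerical semigroup and a_i, a_j distinct minimal generators with x = u·a_i + v·a_j where u, v ≥ 2. Then the elements a_i, a_j, 2a_i, 2a_j, a_i + a_j, 2a_i + a_j, a_i + 2a_j, 2a_i + 2a_j are 8 distinct elements of B(x) \ {0}; in particular |B(x) \ {0}| ≥ 8. -/
/-! Every `p * aᵢ + q * aⱼ` with `p ≤ u`, `q ≤ v` lies in `B(x)`, the complementary summand
being `(u - p) * aᵢ + (v - q) * aⱼ`. Among the eight nonzero such sums with `p, q ≤ 2` the only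
possible coincidences force `aᵢ = aⱼ`, `aᵢ = 2 aⱼ` or `aⱼ = 2 aᵢ`, and the last two contradict
minimality of the generators. -/

/-- A numerical semigroup: a cofinite additive submonoid of ℕ. -/
def IsNumericalSemigroup (Λ : Set ℕ) : Prop :=
  0 ∈ Λ ∧ (∀ a ∈ Λ, ∀ b ∈ Λ, a + b ∈ Λ) ∧ (Λᶜ).Finite

/-- An ideal of a numerical semigroup: a nonempty subset `I ⊆ Λ` with `I + Λ ⊆ I`. -/
def IsIdeal (Λ I : Set ℕ) : Prop :=
  I.Nonempty ∧ I ⊆ Λ ∧ ∀ i ∈ I, ∀ s ∈ Λ, i + s ∈ I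

/-- An irreducible ideal: one that is not the intersection of two proper ideals
each properly containing it. -/
def IsIrreducibleIdeal (Λ I : Set ℕ) : Prop :=
  IsIdeal Λ I ∧
    ¬ ∃ J K : Set ℕ, IsIdeal Λ J ∧ IsIdeal Λ K ∧ J ≠ Λ ∧ K ≠ Λ ∧
      I ⊂ J ∧ I ⊂ K ∧ I = J ∩ K

/-- The graph `G_I(Λ)`: vertices are the nonzero elements of `Λ \ I`,
and `x ~ y` iff `x + y ∈ I`. -/
def semigroupGraph (Λ I : Set ℕ) : SimpleGraph ↥((Λ \ I) \ {0}) where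
  Adj x y := (x : ℕ) ≠ (y : ℕ) ∧ (x : ℕ) + (y : ℕ) ∈ I
  symm := by
    constructor
    intro x y h
    exact ⟨fun e => h.1 e.symm, by rw [add_comm]; exact h.2⟩
  loopless := by constructor; intro x h; exact h.1 rfl

/-- `B(x) = {y ∈ Λ : x - y ∈ Λ}` (i.e. `y + z = x` for some `z ∈ Λ`). -/
def Bset (Λ : Set ℕ) (x : ℕ) : Set ℕ :=
  {y ∈ Λ | ∃ z ∈ Λ, y + z = x}

/-- The minimal generating set of a numerical semigroup: the nonzero elements
that are not sums of two nonzero elements. -/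
def MinimalGenerators (Λ : Set ℕ) : Set ℕ :=
  {a ∈ Λ | a ≠ 0 ∧ ¬ ∃ b ∈ Λ, ∃ c ∈ Λ, b ≠ 0 ∧ c ≠ 0 ∧ a = b + c}

/-- `L_x^{(p)}`: representations of `x` as a positive-integer combination of
exactly `p` distinct minimal generators of `Λ`, encoded as finitely supported
functions from generators to positive coefficients. -/
def Lrep (Λ : Set ℕ) (x : ℕ) (p : ℕ) : Set (ℕ →₀ ℕ) :=
  {u | (↑u.support : Set ℕ) ⊆ MinimalGenerators Λ ∧ u.support.card = p ∧
    u.sum (fun a c => c * a) = x}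

/-- `G` contains a subdivision of `H`: branch vertices joined by internally
disjoint paths. -/
def SimpleGraph.ContainsSubdivision {V W : Type*} (G : SimpleGraph V)
    (H : SimpleGraph W) : Prop :=
  ∃ b : W ↪ V, ∃ P : ∀ i j : W, H.Adj i j → G.Walk (b i) (b j),
    (∀ i j (h : H.Adj i j), (P i j h).IsPath) ∧
    (∀ i j (h : H.Adj i j) (k : W), b k ∈ (P i j h).support → k = i ∨ k = j) ∧
    (∀ i j (h : H.Adj i j) (i' j' : W) (h' : H.Adj i' j'),
      ({i, j} : Set W) ≠ {i', j'} →
      ∀ v, v ∈ (P i j h).support → v ∈ (P i' j' h').support →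
        v = b i ∨ v = b j)

/-- Planarity via Kuratowski's criterion: no subgraph homeomorphic to
`K₅` or `K₃,₃`. -/
def SimpleGraph.Planar {V : Type*} (G : SimpleGraph V) : Prop :=
  ¬ G.ContainsSubdivision (⊤ : SimpleGraph (Fin 5)) ∧
  ¬ G.ContainsSubdivision (completeBipartiteGraph (Fin 3) (Fin 3))

namespace IsNumericalSemigroup

variable {Λ : Set ℕ}

theorem mul_mem (hΛ : IsNumericalSemigroup Λ) (n : ℕ) {a : ℕ} (ha : a ∈ Λ) : n * a ∈ Λ := by
  induction n with
  | zero => simpa using hΛ.1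
  | succ n ih => simpa [Nat.succ_mul] using hΛ.2.1 _ ih _ ha

theorem mul_add_mul_mem (hΛ : IsNumericalSemigroup Λ) (p q : ℕ) {a b : ℕ} (ha : a ∈ Λ)
    (hb : b ∈ Λ) : p * a + q * b ∈ Λ :=
  hΛ.2.1 _ (hΛ.mul_mem p ha) _ (hΛ.mul_mem q hb)

theorem mul_add_mul_mem_Bset (hΛ : IsNumericalSemigroup Λ) {a b p q u v : ℕ} (ha : a ∈ Λ)
    (hb : b ∈ Λ) (hp : p ≤ u) (hq : q ≤ v) : p * a + q * b ∈ Bset Λ (u * a + v * b) := by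
  refine ⟨hΛ.mul_add_mul_mem p q ha hb, (u - p) * a + (v - q) * b,
    hΛ.mul_add_mul_mem _ _ ha hb, ?_⟩
  rw [Nat.sub_mul, Nat.sub_mul]
  have := Nat.mul_le_mul_right a hp
  have := Nat.mul_le_mul_right b hq
  omega

end IsNumericalSemigroup

theorem Bset_finite (Λ : Set ℕ) (x : ℕ) : (Bset Λ x).Finite :=
  (Set.finite_Iic x).subset fun _ ⟨_, _, _, h⟩ => Set.mem_Iic.2 (h ▸ Nat.le_add_right _ _)

theorem ne_two_mul_of_mem_minimalGenerators {Λ : Set ℕ} {a b : ℕ}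
    (ha : a ∈ MinimalGenerators Λ) (hb : b ∈ Λ) (hb0 : b ≠ 0) : a ≠ 2 * b := by
  rintro rfl
  exact ha.2.2 ⟨b, hb, b, hb, hb0, hb0, two_mul b⟩

def smallCombinations (a b : ℕ) : Set ℕ :=
  {a, b, 2 * a, 2 * b, a + b, 2 * a + b, a + 2 * b, 2 * a + 2 * b}

theorem smallCombinations_subset_Bset {Λ : Set ℕ} (hΛ : IsNumericalSemigroup Λ)
    {a b u v : ℕ} (ha : a ∈ Λ) (hb : b ∈ Λ) (ha0 : a ≠ 0) (hb0 : b ≠ 0) (hu : 2 ≤ u)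
    (hv : 2 ≤ v) : smallCombinations a b ⊆ Bset Λ (u * a + v * b) \ {0} := by
  have hB {p q : ℕ} (hp : p ≤ 2) (hq : q ≤ 2) : p * a + q * b ∈ Bset Λ (u * a + v * b) :=
    hΛ.mul_add_mul_mem_Bset ha hb (hp.trans hu) (hq.trans hv)
  intro y hy
  refine ⟨?_, by rcases hy with rfl | rfl | rfl | rfl | rfl | rfl | rfl | rfl <;> simp <;> omega⟩
  rcases hy with rfl | rfl | rfl | rfl | rfl | rfl | rfl | rfl
  · simpa using hB (p := 1) (q := 0) (by omega) (by omega)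
  · simpa using hB (p := 0) (q := 1) (by omega) (by omega)
  · simpa using hB (p := 2) (q := 0) (by omega) (by omega)
  · simpa using hB (p := 0) (q := 2) (by omega) (by omega)
  · simpa using hB (p := 1) (q := 1) (by omega) (by omega)
  · simpa using hB (p := 2) (q := 1) (by omega) (by omega)
  · simpa using hB (p := 1) (q := 2) (by omega) (by omega)
  · simpa using hB (p := 2) (q := 2) (by omega) (by omega)

theorem ncard_smallCombinations {a b : ℕ} (ha0 : a ≠ 0) (hb0 : b ≠ 0) (hab : a ≠ b)
    (ha : a ≠ 2 * b) (hb : b ≠ 2 * a) : (smallCombinations a b).ncard = 8 := by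
  unfold smallCombinations
  repeat rw [Set.ncard_insert_of_notMem
    (by simp only [Set.mem_insert_iff, Set.mem_singleton_iff]; omega)]
  rw [Set.ncard_singleton]

/-- If `x = u·aᵢ + v·aⱼ` with `u, v ≥ 2` and `aᵢ ≠ aⱼ` minimal
generators, then the listed 8 elements are distinct elements of `B(x) \ {0}`;
in particular `|B(x) \ {0}| ≥ 8`. -/
theorem Bset_card_ge_eight (Λ : Set ℕ)
    (hΛ : IsNumericalSemigroup Λ) (x ai aj u v : ℕ)
    (hai : ai ∈ MinimalGenerators Λ) (haj : aj ∈ MinimalGenerators Λ)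
    (hij : ai ≠ aj) (hu : 2 ≤ u) (hv : 2 ≤ v) (hx : x = u * ai + v * aj) :
    ({ai, aj, 2 * ai, 2 * aj, ai + aj, 2 * ai + aj, ai + 2 * aj,
        2 * ai + 2 * aj} : Set ℕ) ⊆ Bset Λ x \ {0} ∧
    ({ai, aj, 2 * ai, 2 * aj, ai + aj, 2 * ai + aj, ai + 2 * aj,
        2 * ai + 2 * aj} : Set ℕ).ncard = 8 ∧
    8 ≤ (Bset Λ x \ {0}).ncard := by
  have hsub := smallCombinations_subset_Bset hΛ hai.1 haj.1 hai.2.1 haj.2.1 hu hv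
  have hcard := ncard_smallCombinations hai.2.1 haj.2.1 hij
    (ne_two_mul_of_mem_minimalGenerators hai haj.1 haj.2.1)
    (ne_two_mul_of_mem_minimalGenerators haj hai.1 hai.2.1)
  subst hx
  exact ⟨hsub, hcard, hcard ▸ Set.ncard_le_ncard hsub (Bset_finite Λ _).sdiff⟩
end

section
/- Let Λ be a numerical semigroup with x = a_i + a_j + a_k for three distinct minimal generators, and suppose this is the only representation of x (L_x^{(p)} = ∅ for p ≠ 3 and |L_x^{(3)}| = 1). Then B(x) \ {0} = {a_i, a_j, a_k, a_i + a_j, a_i + a_k, a_j + a_k, x} has exactly 7 elements. -/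
/-! If `x` has a single factorization `aᵢ + aⱼ + a_k` into minimal generators, then any
decomposition `x = y + z` in `Λ` factors `y` and `z` into generators, and the two factorizations
together form the unique one of `x`. Hence the nonzero elements of `B(x)` are exactly the sums of the
nonempty sub-multisets of `{aᵢ, aⱼ, a_k}`; these seven sums are distinct because the generators
are distinct, nonzero, and none of them is the sum of the other two. -/

def IsNumericalSemigroup.toAddSubmonoid {Λ : Set ℕ} (hΛ : IsNumericalSemigroup Λ) :
    AddSubmonoid ℕ where
  carrier := Λ
  zero_mem' := hΛ.1
  add_mem' ha hb := hΛ.2.1 _ ha _ hb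

section MinimalGenerators

variable {Λ : Set ℕ}

lemma ne_zero_of_mem_minimalGenerators {a : ℕ} (ha : a ∈ MinimalGenerators Λ) : a ≠ 0 :=
  ha.2.1

lemma ne_add_of_mem_minimalGenerators {a b c : ℕ} (ha : a ∈ MinimalGenerators Λ) (hb : b ∈ Λ)
    (hc : c ∈ Λ) (hb0 : b ≠ 0) (hc0 : c ≠ 0) : a ≠ b + c :=
  fun h => ha.2.2 ⟨b, hb, c, hc, hb0, hc0, h⟩

lemma exists_multiset_minimalGenerators_sum_eq {a : ℕ} (ha : a ∈ Λ) :
    ∃ M : Multiset ℕ, (∀ g ∈ M, g ∈ MinimalGenerators Λ) ∧ M.sum = a := by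
  induction a using Nat.strong_induction_on with
  | _ a ih =>
    by_cases ha0 : a = 0
    · exact ⟨0, by simp, by simp [ha0]⟩
    by_cases hgen : a ∈ MinimalGenerators Λ
    · exact ⟨{a}, by simpa using hgen, by simp⟩
    obtain ⟨b, hb, c, hc, hb0, hc0, rfl⟩ : ∃ b ∈ Λ, ∃ c ∈ Λ, b ≠ 0 ∧ c ≠ 0 ∧ a = b + c := by
      by_contra h
      exact hgen ⟨ha, ha0, h⟩
    obtain ⟨Mb, hMb, rfl⟩ := ih b (by omega) hb
    obtain ⟨Mc, hMc, rfl⟩ := ih c (by omega) hc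
    refine ⟨Mb + Mc, fun g hg => ?_, Multiset.sum_add Mb Mc⟩
    rcases Multiset.mem_add.mp hg with h | h
    exacts [hMb g h, hMc g h]

lemma Multiset.toFinsupp_mem_Lrep {M : Multiset ℕ} (hM : ∀ g ∈ M, g ∈ MinimalGenerators Λ) :
    M.toFinsupp ∈ Lrep Λ M.sum M.toFinset.card := by
  refine ⟨?_, by rw [Multiset.toFinsupp_support], ?_⟩
  · rw [Multiset.toFinsupp_support]
    exact fun g hg => hM g (by simpa using hg)
  · rw [Finsupp.sum, Multiset.toFinsupp_support, Finset.sum_multiset_count M]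
    exact Finset.sum_congr rfl fun g _ => by simp [mul_comm]

lemma multiset_eq_of_Lrep_ncard_eq_one {x p : ℕ} (hL : (Lrep Λ x p).ncard = 1)
    (hLq : ∀ q, q ≠ p → Lrep Λ x q = ∅) {M N : Multiset ℕ}
    (hM : ∀ g ∈ M, g ∈ MinimalGenerators Λ) (hN : ∀ g ∈ N, g ∈ MinimalGenerators Λ)
    (hMx : M.sum = x) (hNx : N.sum = x) : M = N := by
  obtain ⟨u, hu⟩ := Set.ncard_eq_one.mp hL
  have mem_Lrep : ∀ K : Multiset ℕ, (∀ g ∈ K, g ∈ MinimalGenerators Λ) → K.sum = x →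
      K.toFinsupp ∈ Lrep Λ x p := by
    intro K hK hKx
    have hmem := Multiset.toFinsupp_mem_Lrep hK
    rw [hKx] at hmem
    by_cases hcard : K.toFinset.card = p
    · rwa [hcard] at hmem
    · simp [hLq _ hcard] at hmem
  apply Multiset.toFinsupp.injective
  have hMu := mem_Lrep M hM hMx
  have hNu := mem_Lrep N hN hNx
  rw [hu, Set.mem_singleton_iff] at hMu hNu
  rw [hMu, hNu]

end MinimalGenerators

lemma Bset_sdiff_zero_eq_of_unique (S : AddSubmonoid ℕ) {M₀ : Multiset ℕ}
    (hM₀ : ∀ g ∈ M₀, g ∈ MinimalGenerators S)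
    (huniq : ∀ M : Multiset ℕ, (∀ g ∈ M, g ∈ MinimalGenerators S) → M.sum = M₀.sum → M = M₀) :
    Bset S M₀.sum \ {0} = Multiset.sum '' {M | M ≤ M₀ ∧ M ≠ 0} := by
  ext y
  constructor
  · rintro ⟨⟨hy, z, hz, hyz⟩, hy0⟩
    obtain ⟨My, hMy, rfl⟩ := exists_multiset_minimalGenerators_sum_eq hy
    obtain ⟨Mz, hMz, rfl⟩ := exists_multiset_minimalGenerators_sum_eq hz
    have hsplit : My + Mz = M₀ := by
      refine huniq _ (fun g hg => ?_) (by rw [Multiset.sum_add, hyz])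
      rcases Multiset.mem_add.mp hg with h | h
      exacts [hMy g h, hMz g h]
    refine ⟨My, ⟨hsplit ▸ Multiset.le_add_right My Mz, ?_⟩, rfl⟩
    rintro rfl
    exact hy0 Multiset.sum_zero
  · rintro ⟨M, ⟨hle, hM0⟩, rfl⟩
    have hgen_mem : ∀ K ≤ M₀, K.sum ∈ S := fun K hK =>
      S.multiset_sum_mem K fun g hg => (hM₀ g (Multiset.mem_of_le hK hg)).1
    refine ⟨⟨hgen_mem M hle, (M₀ - M).sum, hgen_mem _ tsub_le_self, ?_⟩, ?_⟩
    · rw [← Multiset.sum_add, add_tsub_cancel_of_le hle]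
    · obtain ⟨g, hg⟩ := Multiset.exists_mem_of_ne_zero hM0
      rw [Set.mem_singleton_iff, Multiset.sum_eq_zero_iff]
      exact fun h => (hM₀ g (Multiset.mem_of_le hle hg)).2.1 (h g hg)

lemma image_sum_nonzero_le_triple (a b c : ℕ) :
    Multiset.sum '' {M : Multiset ℕ | M ≤ {a, b, c} ∧ M ≠ 0} =
      {a, b, c, a + b, a + c, b + c, a + b + c} := by
  ext y
  simp only [← Multiset.mem_powerset, Multiset.insert_eq_cons, Multiset.powerset_cons]
  simp [or_and_right, exists_or, eq_comm (b := y), add_assoc]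
  tauto

lemma ncard_sums_of_three {a b c : ℕ} (ha : a ≠ 0) (hb : b ≠ 0) (hc : c ≠ 0)
    (hab : a ≠ b) (hac : a ≠ c) (hbc : b ≠ c)
    (ha' : a ≠ b + c) (hb' : b ≠ a + c) (hc' : c ≠ a + b) :
    ({a, b, c, a + b, a + c, b + c, a + b + c} : Set ℕ).ncard = 7 := by
  rw [← Finset.coe_singleton, ← Finset.coe_insert, ← Finset.coe_insert, ← Finset.coe_insert,
    ← Finset.coe_insert, ← Finset.coe_insert, ← Finset.coe_insert, Set.ncard_coe_finset]
  repeat rw [Finset.card_insert_of_notMem (by simp; omega)]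
  rfl

/-- If `x = aᵢ + aⱼ + a_k` for three distinct minimal generators
and this is the only representation of `x`, then
`B(x) \ {0} = {aᵢ, aⱼ, a_k, aᵢ+aⱼ, aᵢ+a_k, aⱼ+a_k, x}` has exactly 7
elements. -/
theorem Bset_of_sum_three_generators (Λ : Set ℕ)
    (hΛ : IsNumericalSemigroup Λ) (x ai aj ak : ℕ)
    (hai : ai ∈ MinimalGenerators Λ) (haj : aj ∈ MinimalGenerators Λ)
    (hak : ak ∈ MinimalGenerators Λ)
    (hij : ai ≠ aj) (hik : ai ≠ ak) (hjk : aj ≠ ak)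
    (hx : x = ai + aj + ak)
    (hL3 : (Lrep Λ x 3).ncard = 1) (hLp : ∀ p, p ≠ 3 → Lrep Λ x p = ∅) :
    Bset Λ x \ {0} = {ai, aj, ak, ai + aj, ai + ak, aj + ak, x} ∧
    (Bset Λ x \ {0}).ncard = 7 := by
  set M₀ : Multiset ℕ := {ai, aj, ak}
  have hM₀x : M₀.sum = x := by simp [M₀, hx, add_assoc]
  have hM₀ : ∀ g ∈ M₀, g ∈ MinimalGenerators Λ := by
    simp only [M₀, Multiset.insert_eq_cons, Multiset.mem_cons, Multiset.mem_singleton]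
    rintro g (rfl | rfl | rfl) <;> assumption
  have hBset : Bset Λ x \ {0} = {ai, aj, ak, ai + aj, ai + ak, aj + ak, x} := by
    rw [hx, ← image_sum_nonzero_le_triple, ← hM₀x.trans hx]
    exact Bset_sdiff_zero_eq_of_unique hΛ.toAddSubmonoid hM₀ fun M hM hMx =>
      multiset_eq_of_Lrep_ncard_eq_one hL3 hLp hM hM₀ (hMx.trans hM₀x) hM₀x
  refine ⟨hBset, ?_⟩
  rw [hBset, hx]
  have hai0 := ne_zero_of_mem_minimalGenerators hai
  have haj0 := ne_zero_of_mem_minimalGenerators haj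
  have hak0 := ne_zero_of_mem_minimalGenerators hak
  exact ncard_sums_of_three hai0 haj0 hak0 hij hik hjk
    (ne_add_of_mem_minimalGenerators hai haj.1 hak.1 haj0 hak0)
    (ne_add_of_mem_minimalGenerators haj hai.1 hak.1 hai0 hak0)
    (ne_add_of_mem_minimalGenerators hak hai.1 haj.1 hai0 haj0)
end

section
/- Let Λ be a numerical semigroup and x ∈ Λ such that x has three representations x = a_i + a_j = a_k + a_l = a_m + a_n as sums of two distinct minimal generators (with {a_i,a_j}, {a_k,a_l}, {a_m,a_n} pairwise disjoint) and no representation as a multiple of a single generator or with three or more generators. Then B(x) \ {0} = {a_i, a_j, a_k, a_l, a_m, a_n, x} has exactly 7 elements. -/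
open Finsupp

theorem Set.eq_of_ncard_eq_three {α : Type*} {s : Set α} {a b c : α} (hs : s.ncard = 3)
    (ha : a ∈ s) (hb : b ∈ s) (hc : c ∈ s) (hab : a ≠ b) (hac : a ≠ c) (hbc : b ≠ c) :
    s = {a, b, c} := by
  have hsub : ({a, b, c} : Set α) ⊆ s := Set.insert_subset ha (Set.insert_subset hb
    (Set.singleton_subset_iff.2 hc))
  have hfin : s.Finite := Set.finite_of_ncard_pos (by omega)
  refine (Set.eq_of_subset_of_ncard_le hsub ?_ hfin).symm
  rw [hs, Set.ncard_eq_three.2 ⟨a, b, c, hab, hac, hbc, rfl⟩]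

theorem Finsupp.eq_single_or_eq_single_of_add_eq_single_add_single {α : Type*}
    {v w : α →₀ ℕ} {a b : α} (h : v + w = single a 1 + single b 1) (hv : v ≠ 0)
    (hw : w ≠ 0) : v = single a 1 ∨ v = single b 1 := by
  classical
  have hsum : toMultiset v + toMultiset w = {a, b} := by
    simpa [toMultiset_add, Multiset.singleton_add] using congrArg toMultiset h
  have hcard : Multiset.card (toMultiset v) = 1 := by
    have := congrArg Multiset.card hsum
    have hv' : toMultiset v ≠ 0 := by simpa [toMultiset_eq_iff] using hv
    have hw' : toMultiset w ≠ 0 := by simpa [toMultiset_eq_iff] using hw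
    simp only [Multiset.card_add, Multiset.insert_eq_cons, Multiset.card_cons,
      Multiset.card_singleton] at this
    have := Multiset.card_pos.2 hv'
    have := Multiset.card_pos.2 hw'
    omega
  obtain ⟨c, hc⟩ := Multiset.card_eq_one.1 hcard
  have hvc : v = single c 1 := by simpa [toMultiset_eq_iff] using hc
  have hcab : c ∈ ({a, b} : Multiset α) :=
    hsum ▸ Multiset.mem_add.2 (Or.inl (hc ▸ Multiset.mem_singleton_self c))
  rcases Multiset.mem_cons.1 hcab with rfl | hcb
  · exact Or.inl hvc
  · exact Or.inr (Multiset.mem_singleton.1 hcb ▸ hvc)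

theorem Finsupp.single_add_single_ne {α : Type*} {a b c d : α} (hac : a ≠ c) (had : a ≠ d) :
    single a 1 + single b 1 ≠ (single c 1 + single d 1 : α →₀ ℕ) := by
  intro h
  have := DFunLike.congr_fun h a
  simp [hac.symm, had.symm] at this

section Factorization

variable {Λ : Set ℕ} {x y : ℕ} {u v : ℕ →₀ ℕ}

def IsFactorization (Λ : Set ℕ) (x : ℕ) (u : ℕ →₀ ℕ) : Prop :=
  (u.support : Set ℕ) ⊆ MinimalGenerators Λ ∧ u.weight id = x

theorem mem_Lrep_iff {p : ℕ} : u ∈ Lrep Λ x p ↔ IsFactorization Λ x u ∧ u.support.card = p :=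
  ⟨fun ⟨hs, hp, hx⟩ => ⟨⟨hs, hx⟩, hp⟩, fun ⟨⟨hs, hx⟩, hp⟩ => ⟨hs, hp, hx⟩⟩

theorem IsFactorization.add (hu : IsFactorization Λ x u) (hv : IsFactorization Λ y v) :
    IsFactorization Λ (x + y) (u + v) := by
  refine ⟨fun a ha => ?_, by rw [map_add, hu.2, hv.2]⟩
  rcases Finset.mem_union.1 (support_add ha) with ha | ha
  exacts [hu.1 ha, hv.1 ha]

theorem isFactorization_single (hx : x ∈ MinimalGenerators Λ) :
    IsFactorization Λ x (single x 1) := by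
  refine ⟨fun a ha => ?_, by simp [weight_single]⟩
  rw [Finset.mem_coe, support_single _ one_ne_zero, Finset.mem_singleton] at ha
  exact ha ▸ hx

theorem IsFactorization.ne_zero (hu : IsFactorization Λ x u) (hx : x ≠ 0) : u ≠ 0 := by
  rintro rfl
  exact hx (by simpa using hu.2.symm)

theorem exists_isFactorization (hy : y ∈ Λ) : ∃ u, IsFactorization Λ y u := by
  induction y using Nat.strong_induction_on with
  | _ y ih =>
  by_cases hy0 : y = 0
  · exact ⟨0, by simp [IsFactorization, hy0]⟩
  by_cases hgen : y ∈ MinimalGenerators Λ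
  · exact ⟨single y 1, isFactorization_single hgen⟩
  obtain ⟨b, hb, c, hc, hb0, hc0, rfl⟩ : ∃ b ∈ Λ, ∃ c ∈ Λ, b ≠ 0 ∧ c ≠ 0 ∧ y = b + c := by
    by_contra h
    exact hgen ⟨hy, hy0, h⟩
  obtain ⟨ub, hub⟩ := ih b (by omega) hb
  obtain ⟨uc, huc⟩ := ih c (by omega) hc
  exact ⟨ub + uc, hub.add huc⟩

theorem single_add_single_mem_Lrep_two {a b : ℕ} (ha : a ∈ MinimalGenerators Λ)
    (hb : b ∈ MinimalGenerators Λ) (hab : a ≠ b) :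
    single a 1 + single b 1 ∈ Lrep Λ (a + b) 2 := by
  refine mem_Lrep_iff.2 ⟨(isFactorization_single ha).add (isFactorization_single hb), ?_⟩
  rw [support_add_eq_union, support_single _ one_ne_zero, support_single _ one_ne_zero]
  exact Finset.card_pair hab

theorem mem_Lrep_two_of_isFactorization (hL1 : Lrep Λ x 1 = ∅)
    (hLp : ∀ p, 3 ≤ p → Lrep Λ x p = ∅) (hu : IsFactorization Λ x u) (hu0 : u ≠ 0) :
    u ∈ Lrep Λ x 2 := by
  have hmem : u ∈ Lrep Λ x u.support.card := mem_Lrep_iff.2 ⟨hu, rfl⟩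
  have h0 : u.support.card ≠ 0 := by simpa using hu0
  have h1 : u.support.card ≠ 1 := fun h => by rw [h, hL1] at hmem; exact hmem
  have h3 : u.support.card < 3 := by
    by_contra h
    rw [hLp _ (not_lt.1 h)] at hmem
    exact hmem
  rwa [show u.support.card = 2 by omega] at hmem

theorem exists_add_mem_Lrep_two_of_mem_Bset (hL1 : Lrep Λ x 1 = ∅)
    (hLp : ∀ p, 3 ≤ p → Lrep Λ x p = ∅) (hy : y ∈ Bset Λ x) (hy0 : y ≠ 0) (hyx : y ≠ x) :
    ∃ v w : ℕ →₀ ℕ, v ≠ 0 ∧ w ≠ 0 ∧ v + w ∈ Lrep Λ x 2 ∧ v.weight id = y := by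
  obtain ⟨hyΛ, z, hzΛ, rfl⟩ := hy
  obtain ⟨v, hv⟩ := exists_isFactorization hyΛ
  obtain ⟨w, hw⟩ := exists_isFactorization hzΛ
  have hz0 : z ≠ 0 := by omega
  refine ⟨v, w, hv.ne_zero hy0, hw.ne_zero hz0, ?_, hv.2⟩
  exact mem_Lrep_two_of_isFactorization hL1 hLp (hv.add hw) (hv.add hw |>.ne_zero (by omega))

theorem add_notMem_minimalGenerators {b c : ℕ} (hb : b ∈ Λ) (hc : c ∈ Λ) (hb0 : b ≠ 0)
    (hc0 : c ≠ 0) : b + c ∉ MinimalGenerators Λ :=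
  fun h => h.2.2 ⟨b, hb, c, hc, hb0, hc0, rfl⟩

theorem mem_Bset_diff_zero_of_add_eq {z : ℕ} (hy : y ∈ Λ) (hz : z ∈ Λ) (hy0 : y ≠ 0)
    (h : y + z = x) : y ∈ Bset Λ x \ {0} :=
  ⟨⟨hy, z, hz, h⟩, hy0⟩

theorem Lrep_two_eq_of_three_pairs {ai aj ak al am an : ℕ}
    (hai : ai ∈ MinimalGenerators Λ) (haj : aj ∈ MinimalGenerators Λ)
    (hak : ak ∈ MinimalGenerators Λ) (hal : al ∈ MinimalGenerators Λ)
    (ham : am ∈ MinimalGenerators Λ) (han : an ∈ MinimalGenerators Λ)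
    (hdist : Function.Injective ![ai, aj, ak, al, am, an])
    (hx1 : x = ai + aj) (hx2 : x = ak + al) (hx3 : x = am + an)
    (hL2 : (Lrep Λ x 2).ncard = 3) :
    Lrep Λ x 2 = {single ai 1 + single aj 1, single ak 1 + single al 1,
      single am 1 + single an 1} := by
  have hne (i j : Fin 6) (hij : i ≠ j) := hdist.ne hij
  exact Set.eq_of_ncard_eq_three hL2
    (hx1 ▸ single_add_single_mem_Lrep_two hai haj (hne 0 1 (by decide)))
    (hx2 ▸ single_add_single_mem_Lrep_two hak hal (hne 2 3 (by decide)))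
    (hx3 ▸ single_add_single_mem_Lrep_two ham han (hne 4 5 (by decide)))
    (single_add_single_ne (hne 0 2 (by decide)) (hne 0 3 (by decide)))
    (single_add_single_ne (hne 0 4 (by decide)) (hne 0 5 (by decide)))
    (single_add_single_ne (hne 2 4 (by decide)) (hne 2 5 (by decide)))

theorem Bset_diff_zero_subset_of_Lrep_two_eq {ai aj ak al am an : ℕ}
    (hL1 : Lrep Λ x 1 = ∅) (hLp : ∀ p, 3 ≤ p → Lrep Λ x p = ∅)
    (hL : Lrep Λ x 2 = {single ai 1 + single aj 1, single ak 1 + single al 1,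
      single am 1 + single an 1}) :
    Bset Λ x \ {0} ⊆ {ai, aj, ak, al, am, an, x} := by
  rintro y ⟨hy, hy0 : y ≠ 0⟩
  by_cases hyx : y = x
  · simp [hyx]
  obtain ⟨v, w, hv, hw, hvw, rfl⟩ := exists_add_mem_Lrep_two_of_mem_Bset hL1 hLp hy hy0 hyx
  rw [hL] at hvw
  rcases hvw with h | h | h <;>
    rcases eq_single_or_eq_single_of_add_eq_single_add_single h hv hw with rfl | rfl <;>
    simp [weight_single]

end Factorization

theorem Set.ncard_insert_six_eq_seven {α : Type*} {a₀ a₁ a₂ a₃ a₄ a₅ b : α}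
    (ha : Function.Injective ![a₀, a₁, a₂, a₃, a₄, a₅])
    (hb : b ∉ Set.range ![a₀, a₁, a₂, a₃, a₄, a₅]) :
    ({a₀, a₁, a₂, a₃, a₄, a₅, b} : Set α).ncard = 7 := by
  have hrange :
      ({a₀, a₁, a₂, a₃, a₄, a₅, b} : Set α) = Set.range ![b, a₀, a₁, a₂, a₃, a₄, a₅] := by
    ext y
    simp only [Matrix.range_cons, Matrix.range_empty, Set.union_empty, Set.singleton_union,
      Set.mem_insert_iff, Set.mem_singleton_iff]
    tauto
  have hinj : Function.Injective ![b, a₀, a₁, a₂, a₃, a₄, a₅] := Fin.cons_injective_iff.2 ⟨hb, ha⟩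
  rw [hrange, Set.ncard_range_of_injective hinj, Nat.card_fin]

/-- If `x = aᵢ+aⱼ = a_k+a_l = a_m+a_n` are three representations
of `x` as sums of two distinct minimal generators, with the pairs pairwise
disjoint, and `x` has no representation as a multiple of a single generator
nor with three or more generators, then
`B(x) \ {0} = {aᵢ, aⱼ, a_k, a_l, a_m, a_n, x}` has exactly 7 elements. -/
theorem Bset_of_three_pair_representations (Λ : Set ℕ)
    (hΛ : IsNumericalSemigroup Λ) (x ai aj ak al am an : ℕ)
    (hai : ai ∈ MinimalGenerators Λ) (haj : aj ∈ MinimalGenerators Λ)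
    (hak : ak ∈ MinimalGenerators Λ) (hal : al ∈ MinimalGenerators Λ)
    (ham : am ∈ MinimalGenerators Λ) (han : an ∈ MinimalGenerators Λ)
    (hdist : Function.Injective ![ai, aj, ak, al, am, an])
    (hx1 : x = ai + aj) (hx2 : x = ak + al) (hx3 : x = am + an)
    (hL1 : Lrep Λ x 1 = ∅) (hL2 : (Lrep Λ x 2).ncard = 3)
    (hLp : ∀ p, 3 ≤ p → Lrep Λ x p = ∅) :
    Bset Λ x \ {0} = {ai, aj, ak, al, am, an, x} ∧
    (Bset Λ x \ {0}).ncard = 7 := by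
  obtain ⟨hΛ0, hΛadd, -⟩ := hΛ
  have hxΛ : x ∈ Λ := hx1 ▸ hΛadd ai hai.1 aj haj.1
  have hx0 : x ≠ 0 := by have := hai.2.1; omega
  have hL := Lrep_two_eq_of_three_pairs hai haj hak hal ham han hdist hx1 hx2 hx3 hL2
  have hset : Bset Λ x \ {0} = {ai, aj, ak, al, am, an, x} := by
    refine subset_antisymm (Bset_diff_zero_subset_of_Lrep_two_eq hL1 hLp hL) ?_
    simp only [Set.insert_subset_iff, Set.singleton_subset_iff]
    exact ⟨mem_Bset_diff_zero_of_add_eq hai.1 haj.1 hai.2.1 hx1.symm,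
      mem_Bset_diff_zero_of_add_eq haj.1 hai.1 haj.2.1 (by omega),
      mem_Bset_diff_zero_of_add_eq hak.1 hal.1 hak.2.1 hx2.symm,
      mem_Bset_diff_zero_of_add_eq hal.1 hak.1 hal.2.1 (by omega),
      mem_Bset_diff_zero_of_add_eq ham.1 han.1 ham.2.1 hx3.symm,
      mem_Bset_diff_zero_of_add_eq han.1 ham.1 han.2.1 (by omega),
      mem_Bset_diff_zero_of_add_eq hxΛ hΛ0 hx0 (add_zero x)⟩
  have hx : x ∉ Set.range ![ai, aj, ak, al, am, an] := by
    rintro ⟨i, rfl⟩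
    refine add_notMem_minimalGenerators hai.1 haj.1 hai.2.1 haj.2.1 (hx1 ▸ ?_)
    fin_cases i <;> assumption
  exact ⟨hset, hset ▸ Set.ncard_insert_six_eq_seven hdist hx⟩
end
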